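/- arXiv:1601.02267 — 2 statements merged into one kernel-verified Lean document; each statement's English description precedes it below -/
import Mathlib

section
/- Let G be a connected non-bipartite graph on at least 3 vertices and t an even integer with t ≥ χ(G) ≥ 3. A proper t-vertex coloring f of G with colors in {0, ..., t−1} is induced by an improper twin t-edge coloring of G if and only if Σ_{v ∈ V(G)} f(v) is even. -/
/-!
The labelings induced by edge colorings form the image of the additive map `s ↦ c_s`.
Each edge contributes its color to both of its ends, so `Σ_v c_s(v) = 2 Σ_e s(e)`; as `t` is even,
an element of `2 ℤ_t` is represented by an even integer, which gives the parity condition.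
Conversely, coloring the edges of a walk from `u` to `v` alternately `a, -a, a, …` induces
`δ_u a - (-1)^ℓ δ_v a`, with `ℓ` the length of the walk. In a connected non-bipartite graph any two
vertices are joined by a walk of even length and every vertex lies on a closed walk of odd length,
so these labelings move mass freely between vertices and create `2a` at any vertex; together they
generate every labeling whose total lies in `2 ℤ_t`.
-/

open Finset

-- The vertex label induced by an edge coloring: `twinLabel G s v = Σ_{e ∈ E_v} s e` in `ZMod k`.
open scoped Classical in
noncomputable def twinLabel {V : Type*} [Fintype V] (G : SimpleGraph V) {k : ℕ}
    (s : Sym2 V → ZMod k) (v : V) : ZMod k :=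
  ∑ e ∈ G.incidenceFinset v, s e

/-- `s` is an improper twin `k`-edge coloring of `G`: the induced vertex labeling
is a proper vertex coloring. -/
def IsImproperTwin {V : Type*} [Fintype V] (G : SimpleGraph V) (k : ℕ)
    (s : Sym2 V → ZMod k) : Prop :=
  ∀ ⦃u v : V⦄, G.Adj u v → twinLabel G s u ≠ twinLabel G s v

/-- The improper twin chromatic index: the least `k ≥ 2` admitting an improper twin
`k`-edge coloring. -/
noncomputable def improperTwinIndex {V : Type*} [Fintype V] (G : SimpleGraph V) : ℕ :=
  sInf {k | 2 ≤ k ∧ ∃ s : Sym2 V → ZMod k, IsImproperTwin G k s}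

namespace SimpleGraph

variable {V : Type*} (G : SimpleGraph V)

theorem exists_odd_loop_of_not_colorable_two (hG : G.Preconnected) (hnb : ¬G.Colorable 2)
    (v : V) : ∃ p : G.Walk v v, Odd p.length := by
  by_contra! hev
  -- otherwise the parity of walk lengths from `v` is a proper 2-coloring
  let path (u : V) : G.Walk v u := (hG v u).some
  refine hnb ⟨Coloring.mk (fun u => ((path u).length : ZMod 2)) fun {u w} huw hcol => ?_⟩
  have hmod : ((path u).length : ZMod 2) = (path w).length := hcol
  rw [ZMod.natCast_eq_natCast_iff'] at hmod
  refine hev ((path u).append (.cons huw (path w).reverse)) ?_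
  rw [Walk.length_append, Walk.length_cons, Walk.length_reverse, Nat.odd_iff]
  omega

theorem exists_even_walk_of_not_colorable_two (hG : G.Preconnected) (hnb : ¬G.Colorable 2)
    (u v : V) : ∃ p : G.Walk u v, Even p.length := by
  obtain ⟨p⟩ := hG u v
  rcases Nat.even_or_odd p.length with hp | hp
  · exact ⟨p, hp⟩
  · obtain ⟨c, hc⟩ := G.exists_odd_loop_of_not_colorable_two hG hnb v
    exact ⟨p.append c, by rw [Walk.length_append]; exact hp.add_odd hc⟩

variable [Fintype V] {k : ℕ}

theorem sum_twinLabel [Fintype G.edgeSet] (s : Sym2 V → ZMod k) :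
    ∑ v, twinLabel G s v = 2 * ∑ e ∈ G.edgeFinset, s e := by
  classical
  simp only [twinLabel, incidenceFinset_eq_filter, sum_filter]
  rw [sum_comm, mul_sum]
  refine sum_congr rfl fun e he => ?_
  induction e with
  | h a b =>
    have hab : a ≠ b := (G.mem_edgeSet.mp (mem_edgeFinset.mp he)).ne
    rw [two_mul, Fintype.sum_eq_add a b hab] <;> simp +contextual [Sym2.mem_iff]

noncomputable def twinLabelHom : (Sym2 V → ZMod k) →+ (V → ZMod k) where
  toFun s := twinLabel G s
  map_zero' := by ext; simp [twinLabel]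
  map_add' s₁ s₂ := by ext; simp [twinLabel, sum_add_distrib]

theorem twinLabelHom_apply (s : Sym2 V → ZMod k) : G.twinLabelHom s = twinLabel G s := rfl

section Generators

variable [DecidableEq V]

theorem single_add_single_mem_range_twinLabelHom {u v : V} (h : G.Adj u v) (a : ZMod k) :
    (Pi.single u a + Pi.single v a : V → ZMod k) ∈ G.twinLabelHom.range := by
  refine ⟨Pi.single s(u, v) a, funext fun w => ?_⟩
  simp only [twinLabelHom_apply, twinLabel, sum_pi_single', mem_incidenceFinset,
    mk'_mem_incidenceSet_iff, h, true_and]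
  rcases eq_or_ne w u with rfl | hu
  · simp [h.ne']
  · rcases eq_or_ne w v with rfl | hv
    · simp [hu]
    · simp [hu, hv]

variable {G} in
theorem Walk.single_sub_single_mem_range_twinLabelHom {u v : V} (p : G.Walk u v) (a : ZMod k) :
    (Pi.single u a - Pi.single v ((-1) ^ p.length * a) : V → ZMod k) ∈ G.twinLabelHom.range := by
  induction p with
  | nil => simp [zero_mem]
  | @cons u x v h q ih =>
    convert sub_mem (G.single_add_single_mem_range_twinLabelHom h a) ih using 1
    rw [length_cons, pow_succ, mul_neg_one, neg_mul, Pi.single_neg]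
    abel

theorem single_sub_single_mem_range_twinLabelHom (hG : G.Preconnected) (hnb : ¬G.Colorable 2)
    (u v : V) (a : ZMod k) :
    (Pi.single u a - Pi.single v a : V → ZMod k) ∈ G.twinLabelHom.range := by
  obtain ⟨p, hp⟩ := G.exists_even_walk_of_not_colorable_two hG hnb u v
  simpa [hp.neg_one_pow] using p.single_sub_single_mem_range_twinLabelHom a

theorem single_two_mul_mem_range_twinLabelHom (hG : G.Preconnected) (hnb : ¬G.Colorable 2)
    (u : V) (a : ZMod k) : (Pi.single u (2 * a) : V → ZMod k) ∈ G.twinLabelHom.range := by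
  obtain ⟨c, hc⟩ := G.exists_odd_loop_of_not_colorable_two hG hnb u
  convert c.single_sub_single_mem_range_twinLabelHom a using 1
  rw [hc.neg_one_pow, neg_one_mul, Pi.single_neg, sub_neg_eq_add, ← Pi.single_add, two_mul]

end Generators

theorem mem_range_twinLabelHom_iff (hG : G.Connected) (hnb : ¬G.Colorable 2)
    {g : V → ZMod k} : g ∈ G.twinLabelHom.range ↔ ∃ y, ∑ v, g v = 2 * y := by
  classical
  constructor
  · rintro ⟨s, rfl⟩
    exact ⟨_, G.sum_twinLabel s⟩
  · rintro ⟨y, hy⟩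
    obtain ⟨w⟩ := hG.nonempty
    have hg : g = ∑ v, (Pi.single v (g v) - Pi.single w (g v)) + Pi.single w (2 * y) := by
      rw [sum_sub_distrib, univ_sum_single, ← hy]
      ext x
      simp [Pi.single_apply]
    rw [hg]
    exact add_mem
      (sum_mem fun v _ => G.single_sub_single_mem_range_twinLabelHom hG.preconnected hnb v w _)
      (G.single_two_mul_mem_range_twinLabelHom hG.preconnected hnb w y)

end SimpleGraph

theorem ZMod.exists_natCast_eq_two_mul_iff_even {t : ℕ} (ht : 2 ∣ t) (n : ℕ) :
    (∃ y : ZMod t, (n : ZMod t) = 2 * y) ↔ Even n := by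
  constructor
  · rintro ⟨y, hy⟩
    rw [← ZMod.natCast_eq_zero_iff_even]
    have := congrArg (ZMod.castHom ht (ZMod 2)) hy
    rwa [map_natCast, map_mul, map_ofNat, show (2 : ZMod 2) = 0 from rfl, zero_mul] at this
  · rintro ⟨m, rfl⟩
    exact ⟨m, by push_cast; ring⟩

theorem stmt_6_general {V : Type*} [Fintype V] (G : SimpleGraph V) (hG : G.Connected)
    (hnb : ¬ G.Colorable 2)
    (t : ℕ) (hte : Even t)
    (htχ : G.chromaticNumber ≤ (t : ℕ∞))
    (f : V → ZMod t) :
    (∃ s : Sym2 V → ZMod t, ∀ u : V, twinLabel G s u = f u) ↔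
      Even (∑ v : V, (f v).val) := by
  have : NeZero t := ⟨by
    rintro rfl
    exact hnb ((SimpleGraph.chromaticNumber_le_iff_colorable.mp htχ).mono zero_le_two)⟩
  have hsum : ((∑ v, (f v).val : ℕ) : ZMod t) = ∑ v, f v := by simp
  rw [← ZMod.exists_natCast_eq_two_mul_iff_even hte.two_dvd, hsum,
    ← G.mem_range_twinLabelHom_iff hG hnb]
  simp [AddMonoidHom.mem_range, funext_iff, SimpleGraph.twinLabelHom_apply]

theorem stmt_6 {V : Type*} [Fintype V] (G : SimpleGraph V) (hG : G.Connected)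
    (h3 : 3 ≤ Fintype.card V) (hnb : ¬ G.Colorable 2)
    (t : ℕ) (hte : Even t)
    (hχ3 : 3 ≤ G.chromaticNumber) (htχ : G.chromaticNumber ≤ (t : ℕ∞))
    (f : V → ZMod t) (hf : ∀ ⦃u w : V⦄, G.Adj u w → f u ≠ f w) :
    (∃ s : Sym2 V → ZMod t, ∀ u : V, twinLabel G s u = f u) ↔
      Even (∑ v : V, (f v).val) :=
  stmt_6_general G hG hnb t hte htχ f
end

section
/- For every even p ≥ 2, the proper p-vertex coloring of the star K_{1,p-1} assigning color 0 to the center and the distinct colors 1, ..., p−1 to the leaves is not induced by any improper twin p-edge coloring, because p(p−1)/2 ≢ 0 (mod p). -/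
/-! Each leaf of a star sees only its edge to the centre, while the centre sees every edge, so the
centre label of any edge colouring is the sum of the leaf labels. Leaf labels `1, …, p - 1` sum to
`p (p - 1) / 2 = (p / 2) (p - 1) ≡ p / 2 (mod p)` for even `p`, which is not the centre colour `0`. -/

open Finset

/-- The star `K_{1,p-1}` on `Fin p` with center `0`. -/
def starGraph (p : ℕ) : SimpleGraph (Fin p) where
  Adj i j := (i.val = 0 ∨ j.val = 0) ∧ i ≠ j
  symm := ⟨by intro i j h; exact ⟨h.1.symm, h.2.symm⟩⟩
  loopless := ⟨by intro i h; exact h.2 rfl⟩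

namespace SimpleGraph

variable {V : Type*} (G : SimpleGraph V)

theorem incidenceFinset_eq_image_neighborFinset [DecidableEq V] (v : V)
    [Fintype (G.neighborSet v)] :
    G.incidenceFinset v = (G.neighborFinset v).image (s(v, ·)) := by
  ext e
  induction e using Sym2.ind with
  | h a b =>
    simp only [mem_incidenceFinset, mk'_mem_incidenceSet_iff, mem_image, mem_neighborFinset,
      Sym2.eq_iff]
    grind [G.adj_symm]

theorem sum_incidenceFinset_eq_sum_neighborFinset {M : Type*} [AddCommMonoid M] [DecidableEq V]
    (v : V) [Fintype (G.neighborSet v)] (f : Sym2 V → M) :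
    ∑ e ∈ G.incidenceFinset v, f e = ∑ w ∈ G.neighborFinset v, f s(v, w) := by
  rw [incidenceFinset_eq_image_neighborFinset, sum_image]
  intro x _ y _ h
  exact Sym2.congr_right.mp h

end SimpleGraph

open scoped Classical in
theorem twinLabel_eq_sum_neighborFinset {V : Type*} [Fintype V] (G : SimpleGraph V) {k : ℕ}
    (s : Sym2 V → ZMod k) (v : V) :
    twinLabel G s v = ∑ w ∈ G.neighborFinset v, s s(v, w) :=
  G.sum_incidenceFinset_eq_sum_neighborFinset v s

section starGraph

variable {p : ℕ} [NeZero p]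

@[simp]
theorem starGraph_adj {i j : Fin p} : (starGraph p).Adj i j ↔ (i = 0 ∨ j = 0) ∧ i ≠ j := by
  simp [starGraph, Fin.val_eq_zero_iff]

theorem starGraph_neighborFinset_zero [Fintype ((starGraph p).neighborSet 0)] :
    (starGraph p).neighborFinset 0 = univ.erase 0 := by
  ext j
  simp [eq_comm]

theorem starGraph_neighborFinset_of_ne_zero {i : Fin p} (hi : i ≠ 0)
    [Fintype ((starGraph p).neighborSet i)] :
    (starGraph p).neighborFinset i = {0} := by
  ext j
  simp only [SimpleGraph.mem_neighborFinset, starGraph_adj, mem_singleton]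
  grind

theorem twinLabel_starGraph_zero {k : ℕ} (s : Sym2 (Fin p) → ZMod k) :
    twinLabel (starGraph p) s 0 = ∑ j ∈ univ.erase 0, twinLabel (starGraph p) s j := by
  classical
  rw [twinLabel_eq_sum_neighborFinset, starGraph_neighborFinset_zero]
  refine sum_congr rfl fun j hj => ?_
  rw [twinLabel_eq_sum_neighborFinset, starGraph_neighborFinset_of_ne_zero (ne_of_mem_erase hj),
    sum_singleton, Sym2.eq_swap]

end starGraph

theorem Nat.mul_pred_div_two_mod_self_of_even {p : ℕ} (hp : Even p) :
    p * (p - 1) / 2 % p = p / 2 := by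
  obtain ⟨m, rfl⟩ := hp
  rcases m with _ | m
  · simp
  · have : (m + 1 + (m + 1)) * (m + 1 + (m + 1) - 1) / 2 = m * (m + 1 + (m + 1)) + (m + 1) := by
      rw [show m + 1 + (m + 1) - 1 = 2 * m + 1 by omega, Nat.div_eq_of_eq_mul_left two_pos]
      ring
    rw [this, Nat.mul_add_mod_self_right, Nat.mod_eq_of_lt (by omega)]
    omega

theorem stmt_13 (p : ℕ) (hp : 2 ≤ p) (hpe : Even p) :
    ¬ ((p * (p - 1) / 2) % p = 0) ∧
    ¬ ∃ s : Sym2 (Fin p) → ZMod p,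
        ∀ i : Fin p, twinLabel (starGraph p) s i = ((i : ℕ) : ZMod p) := by
  have hmod : p * (p - 1) / 2 % p ≠ 0 := by
    rw [Nat.mul_pred_div_two_mod_self_of_even hpe]
    omega
  refine ⟨hmod, ?_⟩
  rintro ⟨s, hs⟩
  have : NeZero p := ⟨by omega⟩
  have hcenter := twinLabel_starGraph_zero s
  simp only [hs] at hcenter
  rw [Fin.val_zero, Nat.cast_zero, sum_erase _ (by simp), ← Nat.cast_sum,
    Fin.sum_univ_eq_sum_range (·), sum_range_id, eq_comm, ZMod.natCast_eq_zero_iff] at hcenter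
  exact hmod (Nat.mod_eq_zero_of_dvd hcenter)
end
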